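/- Let B × F₁ × ⋯ × F_l be a (possibly degenerate) multiply warped product of singular semi-Riemannian manifolds (B,g_B) and (F_j,g_{F_j}) with warping functions f_j ∈ C^∞(B), 1 ≤ j ≤ l. Let X,Y,Z be vector fields on B and U_j,V_j,W_j vector fields on F_j (identified with their lifts), and let K denote the Koszul form of the multiply warped product metric, K_B that of (B,g_B), and K_{F_j} that of (F_j,g_{F_j}). Then: (1) K(X,Y,Z) = K_B(X,Y,Z); (2) K(X,Y,W_j) = K(X,W_j,Y) = K(W_j,X,Y) = 0; (3) K(X,V_j,W_j) = K(V_j,X,W_j) = −K(V_j,W_j,X) = f_j·g_{F_j}(V_j,W_j)·X(f_j); (4) K(X,V_i,W_j) = K(V_i,X,W_j) = K(V_i,W_j,X) = 0 for i ≠ j; (5) K(U_j,V_j,W_j) = f_j²·K_{F_j}(U_j,V_j,W_j); (6) K(U_i,V_j,W_k) = 0 whenever i,j,k are pairwise distinct; (7) K(U_i,V_i,W_j) = K(U_i,W_j,V_i) = K(W_j,U_i,V_i) = 0 for i ≠ j. -/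

import Mathlib

noncomputable section

/-!
An algebraic (Koszul-style) model of singular semi-Riemannian manifolds, following
Stoica's "singular semi-Riemannian geometry".

* `M` is the set of points of the smooth manifold;
* `T p` is the tangent space at `p : M`;
* `IsFn h` says that `h : M → ℝ` is a smooth function, i.e. `h ∈ C^∞(M)`;
* `IsVF X` says that the section `X : ∀ p, T p` of the tangent bundle is a smooth
  vector field, i.e. `X ∈ Γ(TM)`;
* `D X h` is the derivative `X(h)` of the smooth function `h` along `X`;
* `bracket X Y` is the Lie bracket `[X,Y]` of vector fields;
* `g` is the metric: a smooth symmetric bilinear form on the tangent bundle, which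
  may be degenerate and of variable signature.
-/
structure SSRM (M : Type*) (T : M → Type*)
    [∀ p, AddCommGroup (T p)] [∀ p, Module ℝ (T p)] where
  /-- the smooth real functions `C^∞(M)` -/
  IsFn : (M → ℝ) → Prop
  /-- the smooth vector fields `Γ(TM)` -/
  IsVF : (∀ p, T p) → Prop
  /-- the directional derivative `X(h)` of a function along a vector field -/
  D : (∀ p, T p) → (M → ℝ) → M → ℝ
  /-- the Lie bracket of vector fields -/
  bracket : (∀ p, T p) → (∀ p, T p) → ∀ p, T p
  /-- the (possibly degenerate) metric, pointwise a bilinear form -/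
  g : ∀ p, T p →ₗ[ℝ] T p →ₗ[ℝ] ℝ
  g_symm : ∀ p u v, g p u v = g p v u
  fn_const : ∀ c : ℝ, IsFn fun _ => c
  fn_add : ∀ a b, IsFn a → IsFn b → IsFn (a + b)
  fn_mul : ∀ a b, IsFn a → IsFn b → IsFn (a * b)
  vf_add : ∀ X Y, IsVF X → IsVF Y → IsVF (X + Y)
  vf_smul : ∀ a X, IsFn a → IsVF X → IsVF fun p => a p • X p
  vf_smulR : ∀ (r : ℝ) X, IsVF X → IsVF (r • X)
  g_smooth : ∀ X Y, IsVF X → IsVF Y → IsFn fun p => g p (X p) (Y p)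
  D_smooth : ∀ X a, IsVF X → IsFn a → IsFn (D X a)
  D_add_fn : ∀ X a b, IsVF X → IsFn a → IsFn b → D X (a + b) = D X a + D X b
  D_mul_fn : ∀ X a b, IsVF X → IsFn a → IsFn b → D X (a * b) = D X a * b + a * D X b
  D_const : ∀ X (c : ℝ), IsVF X → D X (fun _ => c) = 0
  D_add_vf : ∀ X Y a, IsVF X → IsVF Y → IsFn a → D (X + Y) a = D X a + D Y a
  D_smul_vf : ∀ b X a, IsFn b → IsVF X → IsFn a →
    D (fun p => b p • X p) a = b * D X a
  bracket_smooth : ∀ X Y, IsVF X → IsVF Y → IsVF (bracket X Y)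
  bracket_antisymm : ∀ X Y, IsVF X → IsVF Y → bracket X Y = -bracket Y X
  bracket_add_left : ∀ X Y Z, IsVF X → IsVF Y → IsVF Z →
    bracket (X + Y) Z = bracket X Z + bracket Y Z
  bracket_leibniz : ∀ X a Y, IsVF X → IsFn a → IsVF Y →
    bracket X (fun p => a p • Y p)
      = (fun p => a p • bracket X Y p) + (fun p => D X a p • Y p)
  D_bracket : ∀ X Y a, IsVF X → IsVF Y → IsFn a →
    D (bracket X Y) a = D X (D Y a) - D Y (D X a)

namespace SSRM

variable {M : Type*} {T : M → Type*} [∀ p, AddCommGroup (T p)] [∀ p, Module ℝ (T p)]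

/-- `⟨X,Y⟩ = g(X,Y)`, as a function on `M`. -/
def gf (S : SSRM M T) (X Y : ∀ p, T p) : M → ℝ := fun p => S.g p (X p) (Y p)

/-- The Koszul form
`K(X,Y,Z) = (1/2){X⟨Y,Z⟩ + Y⟨Z,X⟩ − Z⟨X,Y⟩ − ⟨X,[Y,Z]⟩ + ⟨Y,[Z,X]⟩ + ⟨Z,[X,Y]⟩}`. -/
def K (S : SSRM M T) (X Y Z : ∀ p, T p) : M → ℝ :=
  ((1 : ℝ) / 2) • (S.D X (S.gf Y Z) + S.D Y (S.gf Z X) - S.D Z (S.gf X Y)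
    - S.gf X (S.bracket Y Z) + S.gf Y (S.bracket Z X) + S.gf Z (S.bracket X Y))

/-- The semi-symmetric metric Koszul form (w.r.t. the vector field `P`):
`K̄(X,Y,Z) = K(X,Y,Z) + g(Y,P)g(X,Z) − g(X,Y)g(P,Z)`. -/
def Kbar (S : SSRM M T) (P X Y Z : ∀ p, T p) : M → ℝ :=
  S.K X Y Z + S.gf Y P * S.gf X Z - S.gf X Y * S.gf P Z

/-- The semi-symmetric non-metric Koszul form (w.r.t. the vector field `P`):
`K̂(X,Y,Z) = K(X,Y,Z) + g(Y,P)g(X,Z)`. -/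
def Khat (S : SSRM M T) (P X Y Z : ∀ p, T p) : M → ℝ :=
  S.K X Y Z + S.gf Y P * S.gf X Z

/-- The Lie derivative of the metric:
`(L_Y g)(Z,X) = Y(g(Z,X)) − g([Y,Z],X) − g(Z,[Y,X])`. -/
def lieD (S : SSRM M T) (Y Z X : ∀ p, T p) : M → ℝ :=
  S.D Y (S.gf Z X) - S.gf (S.bracket Y Z) X - S.gf Z (S.bracket Y X)

/-- `W ∈ Γ₀(TM)`: a smooth vector field with `g(W,Y) = 0` for every vector field `Y`. -/
def Gamma0 (S : SSRM M T) (W : ∀ p, T p) : Prop :=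
  S.IsVF W ∧ ∀ Y, S.IsVF Y → S.gf W Y = 0

/-- A 1-form `ω` (given by its action `ω(Z)` on vector fields) belongs to `A^•(M)`:
at every point `p` the covector `ω_p` lies in the image of the flat map
`v ↦ g_p(v,·) : T_pM → T_p*M`. -/
def MemAsup (S : SSRM M T) (ω : (∀ p, T p) → M → ℝ) : Prop :=
  ∀ p : M, ∃ v : T p, ∀ Z, S.IsVF Z → ω Z p = S.g p v (Z p)

/-- `(M,g)` is radical-stationary: `K(X,Y,·) ∈ A^•(M)` for all vector fields `X,Y`. -/
def RadicalStationary (S : SSRM M T) : Prop :=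
  ∀ X Y, S.IsVF X → S.IsVF Y → S.MemAsup fun Z => S.K X Y Z

/-- `Y^♭ = g(Y,·)`, as a 1-form. -/
def flat (S : SSRM M T) (Y : ∀ p, T p) : (∀ p, T p) → M → ℝ := fun Z => S.gf Y Z

/-- The semi-symmetric metric lower covariant derivative: `∇̄♭_X Y = K̄(X,Y,·)`. -/
def nablaFlatBar (S : SSRM M T) (P X Y : ∀ p, T p) : (∀ p, T p) → M → ℝ :=
  fun Z => S.Kbar P X Y Z

/-- The semi-symmetric non-metric lower covariant derivative: `∇̂♭_X Y = K̂(X,Y,·)`. -/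
def nablaFlatHat (S : SSRM M T) (P X Y : ∀ p, T p) : (∀ p, T p) → M → ℝ :=
  fun Z => S.Khat P X Y Z

/-- Pointwise application of a bundle map `J : TM → TM` to a vector field. -/
def Jv (J : ∀ p, T p →ₗ[ℝ] T p) (X : ∀ p, T p) : ∀ p, T p := fun p => J p (X p)

/-- `J` is an almost product structure on `(M,g)`: a smooth bundle map `J : TM → TM`
with `J² = id` and `g(JX,JY) = g(X,Y)`. -/
structure IsAlmostProduct (S : SSRM M T) (J : ∀ p, T p →ₗ[ℝ] T p) : Prop where
  invol : ∀ p v, J p (J p v) = v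
  compat : ∀ p u v, S.g p (J p u) (J p v) = S.g p u v
  smooth : ∀ X, S.IsVF X → S.IsVF (Jv J X)

/-- The almost product Koszul form `K̃(X,Y,Z) = (1/2)[K(X,Y,Z) + K(X,JY,JZ)]`. -/
def Ktilde (S : SSRM M T) (J : ∀ p, T p →ₗ[ℝ] T p) (X Y Z : ∀ p, T p) : M → ℝ :=
  ((1 : ℝ) / 2) • (S.K X Y Z + S.K X (Jv J Y) (Jv J Z))

/-- The almost product lower covariant derivative: `∇̃♭_X Y = K̃(X,Y,·)`. -/
def nablaFlatTilde (S : SSRM M T) (J : ∀ p, T p →ₗ[ℝ] T p) (X Y : ∀ p, T p) :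
    (∀ p, T p) → M → ℝ :=
  fun Z => S.Ktilde J X Y Z

end SSRM

namespace SSRM

variable {MB : Type*} {TB : MB → Type*}
  [∀ p, AddCommGroup (TB p)] [∀ p, Module ℝ (TB p)]
  {l : ℕ} {MF : Fin l → Type*} {TF : ∀ j, MF j → Type*}
  [∀ j q, AddCommGroup (TF j q)] [∀ j q, Module ℝ (TF j q)]

/-- The lift to the product `B × F₁ × ⋯ × F_l` of a vector field on the base `B`. -/
def mliftB (X : ∀ p, TB p) :
    ∀ pq : MB × (∀ j, MF j), TB pq.1 × (∀ j, TF j (pq.2 j)) :=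
  fun pq => (X pq.1, 0)

/-- The lift to the product `B × F₁ × ⋯ × F_l` of a vector field on the fiber `F_j`. -/
def mliftF (j : Fin l) (U : ∀ q, TF j q) :
    ∀ pq : MB × (∀ j, MF j), TB pq.1 × (∀ j, TF j (pq.2 j)) :=
  fun pq => (0, Pi.single j (U (pq.2 j)))

/-- `W` is the multiply warped product `B × F₁ × ⋯ × F_l` of the singular
semi-Riemannian manifolds `B` and `F_j` with warping functions `f_j ∈ C^∞(B)`:
a singular semi-Riemannian structure on the product manifold whose metric is
`⟨x,y⟩ = g_B(dπ_B x, dπ_B y) + Σ_j f_j(π_B p)² g_{F_j}(dπ_{F_j} x, dπ_{F_j} y)`,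
and whose smooth structure, directional derivative and Lie bracket behave
canonically on the lifts of functions and of vector fields from the factors. -/
structure IsMultiplyWarpedProduct (B : SSRM MB TB) (F : ∀ j, SSRM (MF j) (TF j))
    (f : Fin l → MB → ℝ)
    (W : SSRM (MB × ∀ j, MF j) fun pq => TB pq.1 × (∀ j, TF j (pq.2 j))) : Prop where
  smooth_f : ∀ j, B.IsFn (f j)
  metric : ∀ (pq : MB × ∀ j, MF j) (u v : TB pq.1 × (∀ j, TF j (pq.2 j))),
    W.g pq u v
      = B.g pq.1 u.1 v.1 + ∑ j, f j pq.1 ^ 2 * (F j).g (pq.2 j) (u.2 j) (v.2 j)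
  fn_liftB : ∀ a, B.IsFn a → W.IsFn fun pq => a pq.1
  fn_liftF : ∀ (j) (b), (F j).IsFn b → W.IsFn fun pq => b (pq.2 j)
  vf_liftB : ∀ X, B.IsVF X → W.IsVF (mliftB X)
  vf_liftF : ∀ (j) (U), (F j).IsVF U → W.IsVF (mliftF j U)
  D_liftB_fnB : ∀ X a, B.IsVF X → B.IsFn a →
    W.D (mliftB X) (fun pq => a pq.1) = fun pq => B.D X a pq.1
  D_liftB_fnF : ∀ X j b, B.IsVF X → (F j).IsFn b →
    W.D (mliftB X) (fun pq => b (pq.2 j)) = 0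
  D_liftF_fnB : ∀ j U a, (F j).IsVF U → B.IsFn a →
    W.D (mliftF j U) (fun pq => a pq.1) = 0
  D_liftF_fnF_same : ∀ j U b, (F j).IsVF U → (F j).IsFn b →
    W.D (mliftF j U) (fun pq => b (pq.2 j)) = fun pq => (F j).D U b (pq.2 j)
  D_liftF_fnF_ne : ∀ i j U b, i ≠ j → (F i).IsVF U → (F j).IsFn b →
    W.D (mliftF i U) (fun pq => b (pq.2 j)) = 0
  bracket_BB : ∀ X Y, B.IsVF X → B.IsVF Y →
    W.bracket (mliftB X) (mliftB Y) = mliftB (B.bracket X Y)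
  bracket_BF : ∀ X j U, B.IsVF X → (F j).IsVF U →
    W.bracket (mliftB X) (mliftF j U) = 0
  bracket_FF_same : ∀ j U V, (F j).IsVF U → (F j).IsVF V →
    W.bracket (mliftF j U) (mliftF j V) = mliftF j ((F j).bracket U V)
  bracket_FF_ne : ∀ i j U V, i ≠ j → (F i).IsVF U → (F j).IsVF V →
    W.bracket (mliftF i U) (mliftF j V) = 0

end SSRM

/-!
Every term of the Koszul formula can be computed on lifts. The metric is block diagonal with
fibre blocks `f_j² g_{F_j}`; brackets of lifts from different factors vanish; a lift
differentiates only functions lifted from its own factor, so the one cross term is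
`X(f_j²) = 2 f_j X(f_j)`. The remaining orderings of the arguments follow from one computed
value by metric compatibility and torsion-freeness of `K`.
-/

namespace SSRM

variable {M : Type*} {T : M → Type*} [∀ p, AddCommGroup (T p)] [∀ p, Module ℝ (T p)]
  (S : SSRM M T)

lemma gf_symm (X Y : ∀ p, T p) : S.gf X Y = S.gf Y X :=
  funext fun p => S.g_symm p _ _

@[simp]
lemma gf_zero_right (X : ∀ p, T p) : S.gf X 0 = 0 := by
  funext p; simp [gf]

lemma isFn_gf {X Y : ∀ p, T p} (hX : S.IsVF X) (hY : S.IsVF Y) : S.IsFn (S.gf X Y) :=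
  S.g_smooth X Y hX hY

lemma D_zero {X : ∀ p, T p} (hX : S.IsVF X) : S.D X 0 = 0 :=
  S.D_const X 0 hX

variable {S} {X Y Z : ∀ p, T p}

/-- Metric compatibility of the Koszul form. -/
lemma K_swap_right (hX : S.IsVF X) (hY : S.IsVF Y) (hZ : S.IsVF Z) :
    S.K X Z Y = S.D X (S.gf Y Z) - S.K X Y Z := by
  rw [K, K, S.bracket_antisymm Z Y hZ hY, S.bracket_antisymm X Z hX hZ,
    S.bracket_antisymm Y X hY hX, S.gf_symm Z X, S.gf_symm Y X, S.gf_symm Z Y]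
  funext p
  simp only [gf, Pi.add_apply, Pi.sub_apply, Pi.smul_apply, Pi.neg_apply, map_neg, smul_eq_mul]
  ring

/-- Torsion-freeness of the Koszul form. -/
lemma K_swap_left (hX : S.IsVF X) (hY : S.IsVF Y) (hZ : S.IsVF Z) :
    S.K Y X Z = S.K X Y Z - S.gf Z (S.bracket X Y) := by
  rw [K, K, S.bracket_antisymm Y X hY hX, S.bracket_antisymm X Z hX hZ,
    S.bracket_antisymm Z Y hZ hY, S.gf_symm Z X, S.gf_symm Y X, S.gf_symm Z Y]
  funext p
  simp only [gf, Pi.add_apply, Pi.sub_apply, Pi.smul_apply, Pi.neg_apply, map_neg, smul_eq_mul]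
  ring

end SSRM

namespace SSRM.IsMultiplyWarpedProduct

variable {MB : Type*} {TB : MB → Type*}
  [∀ p, AddCommGroup (TB p)] [∀ p, Module ℝ (TB p)]
  {l : ℕ} {MF : Fin l → Type*} {TF : ∀ j, MF j → Type*}
  [∀ j q, AddCommGroup (TF j q)] [∀ j q, Module ℝ (TF j q)]
  {B : SSRM MB TB} {F : ∀ j, SSRM (MF j) (TF j)} {f : Fin l → MB → ℝ}
  {Wp : SSRM (MB × ∀ j, MF j) fun pq => TB pq.1 × (∀ j, TF j (pq.2 j))}
  {X Y Z : ∀ p, TB p} {i j k : Fin l}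

lemma gf_liftB_liftB (hWp : IsMultiplyWarpedProduct B F f Wp) (X Y : ∀ p, TB p) :
    Wp.gf (mliftB X) (mliftB Y) = fun pq => B.gf X Y pq.1 := by
  funext pq
  simp [gf, hWp.metric, mliftB]

lemma gf_liftB_liftF (hWp : IsMultiplyWarpedProduct B F f Wp) (X : ∀ p, TB p)
    (U : ∀ q, TF j q) : Wp.gf (mliftB X) (mliftF j U) = 0 := by
  funext pq
  simp [gf, hWp.metric, mliftB, mliftF]

lemma gf_liftF_liftB (hWp : IsMultiplyWarpedProduct B F f Wp) (U : ∀ q, TF j q)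
    (X : ∀ p, TB p) : Wp.gf (mliftF j U) (mliftB X) = 0 := by
  rw [gf_symm, hWp.gf_liftB_liftF]

lemma gf_liftF_liftF_self (hWp : IsMultiplyWarpedProduct B F f Wp) (U V : ∀ q, TF j q) :
    Wp.gf (mliftF j U) (mliftF j V) = fun pq => f j pq.1 ^ 2 * (F j).gf U V (pq.2 j) := by
  funext pq
  simp only [gf, hWp.metric, mliftF, map_zero, zero_add]
  rw [Finset.sum_eq_single j (fun k _ hk => by simp [Pi.single_eq_of_ne hk]) (by simp)]
  simp

lemma gf_liftF_liftF_of_ne (hWp : IsMultiplyWarpedProduct B F f Wp) (hij : i ≠ j)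
    (U : ∀ q, TF i q) (V : ∀ q, TF j q) : Wp.gf (mliftF i U) (mliftF j V) = 0 := by
  funext pq
  simp only [gf, hWp.metric, mliftF, map_zero, zero_add, Pi.zero_apply]
  refine Finset.sum_eq_zero fun k _ => ?_
  rcases eq_or_ne k i with rfl | hk
  · simp [Pi.single_eq_of_ne hij]
  · simp [Pi.single_eq_of_ne hk]

lemma bracket_liftF_liftB (hWp : IsMultiplyWarpedProduct B F f Wp) {U : ∀ q, TF j q}
    (hU : (F j).IsVF U) (hX : B.IsVF X) : Wp.bracket (mliftF j U) (mliftB X) = 0 := by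
  rw [Wp.bracket_antisymm _ _ (hWp.vf_liftF j U hU) (hWp.vf_liftB X hX),
    hWp.bracket_BF X j U hX hU, neg_zero]

lemma D_warpingSq_mul (hWp : IsMultiplyWarpedProduct B F f Wp)
    {Z : ∀ pq : MB × ∀ j, MF j, TB pq.1 × ∀ j, TF j (pq.2 j)}
    (hZ : Wp.IsVF Z) {b : MF j → ℝ} (hb : (F j).IsFn b) :
    Wp.D Z (fun pq => f j pq.1 ^ 2 * b (pq.2 j))
      = Wp.D Z (fun pq => (f j * f j) pq.1) * (fun pq => b (pq.2 j))
        + (fun pq => (f j * f j) pq.1) * Wp.D Z (fun pq => b (pq.2 j)) := by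
  have hff : B.IsFn (f j * f j) := B.fn_mul _ _ (hWp.smooth_f j) (hWp.smooth_f j)
  rw [← Wp.D_mul_fn _ _ _ hZ (hWp.fn_liftB _ hff) (hWp.fn_liftF j _ hb)]
  congr 1
  funext pq
  simp [sq]

lemma D_liftB_gf_liftB_liftB (hWp : IsMultiplyWarpedProduct B F f Wp) (hX : B.IsVF X)
    (hY : B.IsVF Y) (hZ : B.IsVF Z) :
    Wp.D (mliftB X) (Wp.gf (mliftB Y) (mliftB Z)) = fun pq => B.D X (B.gf Y Z) pq.1 := by
  rw [hWp.gf_liftB_liftB, hWp.D_liftB_fnB X _ hX (B.isFn_gf hY hZ)]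

lemma D_liftF_gf_liftB_liftB (hWp : IsMultiplyWarpedProduct B F f Wp) {U : ∀ q, TF j q}
    (hU : (F j).IsVF U) (hX : B.IsVF X) (hY : B.IsVF Y) :
    Wp.D (mliftF j U) (Wp.gf (mliftB X) (mliftB Y)) = 0 := by
  rw [hWp.gf_liftB_liftB, hWp.D_liftF_fnB j U _ hU (B.isFn_gf hX hY)]

lemma D_liftB_gf_liftF_liftF (hWp : IsMultiplyWarpedProduct B F f Wp) (hX : B.IsVF X)
    {V W : ∀ q, TF j q} (hV : (F j).IsVF V) (hW : (F j).IsVF W) :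
    Wp.D (mliftB X) (Wp.gf (mliftF j V) (mliftF j W))
      = fun pq => 2 * (f j pq.1 * (F j).gf V W (pq.2 j) * B.D X (f j) pq.1) := by
  have hf := hWp.smooth_f j
  rw [hWp.gf_liftF_liftF_self, hWp.D_warpingSq_mul (hWp.vf_liftB X hX) ((F j).isFn_gf hV hW),
    hWp.D_liftB_fnB X _ hX (B.fn_mul _ _ hf hf), hWp.D_liftB_fnF X j _ hX ((F j).isFn_gf hV hW),
    B.D_mul_fn X _ _ hX hf hf]
  funext pq
  simp only [Pi.add_apply, Pi.mul_apply, Pi.zero_apply]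
  ring

lemma D_liftF_gf_liftF_liftF_self (hWp : IsMultiplyWarpedProduct B F f Wp)
    {U V W : ∀ q, TF j q} (hU : (F j).IsVF U) (hV : (F j).IsVF V) (hW : (F j).IsVF W) :
    Wp.D (mliftF j U) (Wp.gf (mliftF j V) (mliftF j W))
      = fun pq => f j pq.1 ^ 2 * (F j).D U ((F j).gf V W) (pq.2 j) := by
  have hf := hWp.smooth_f j
  rw [hWp.gf_liftF_liftF_self, hWp.D_warpingSq_mul (hWp.vf_liftF j U hU) ((F j).isFn_gf hV hW),
    hWp.D_liftF_fnB j U _ hU (B.fn_mul _ _ hf hf),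
    hWp.D_liftF_fnF_same j U _ hU ((F j).isFn_gf hV hW)]
  funext pq
  simp [sq]

lemma D_liftF_gf_liftF_liftF_of_ne (hWp : IsMultiplyWarpedProduct B F f Wp) (hij : i ≠ j)
    {U : ∀ q, TF i q} {V W : ∀ q, TF j q}
    (hU : (F i).IsVF U) (hV : (F j).IsVF V) (hW : (F j).IsVF W) :
    Wp.D (mliftF i U) (Wp.gf (mliftF j V) (mliftF j W)) = 0 := by
  have hf := hWp.smooth_f j
  rw [hWp.gf_liftF_liftF_self, hWp.D_warpingSq_mul (hWp.vf_liftF i U hU) ((F j).isFn_gf hV hW),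
    hWp.D_liftF_fnB i U _ hU (B.fn_mul _ _ hf hf),
    hWp.D_liftF_fnF_ne i j U _ hij hU ((F j).isFn_gf hV hW)]
  simp

lemma K_liftB_liftB_liftB (hWp : IsMultiplyWarpedProduct B F f Wp)
    (hX : B.IsVF X) (hY : B.IsVF Y) (hZ : B.IsVF Z) :
    Wp.K (mliftB X) (mliftB Y) (mliftB Z) = fun pq => B.K X Y Z pq.1 := by
  rw [K, hWp.D_liftB_gf_liftB_liftB hX hY hZ, hWp.D_liftB_gf_liftB_liftB hY hZ hX,
    hWp.D_liftB_gf_liftB_liftB hZ hX hY, hWp.bracket_BB Y Z hY hZ, hWp.bracket_BB Z X hZ hX,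
    hWp.bracket_BB X Y hX hY, hWp.gf_liftB_liftB, hWp.gf_liftB_liftB, hWp.gf_liftB_liftB]
  rfl

lemma K_liftB_liftB_liftF (hWp : IsMultiplyWarpedProduct B F f Wp)
    (hX : B.IsVF X) (hY : B.IsVF Y) {W : ∀ q, TF j q} (hW : (F j).IsVF W) :
    Wp.K (mliftB X) (mliftB Y) (mliftF j W) = 0 := by
  simp [K, hWp.gf_liftB_liftF, hWp.gf_liftF_liftB, hWp.D_liftF_gf_liftB_liftB hW hX hY,
    hWp.bracket_BF _ _ _ hY hW, hWp.bracket_liftF_liftB hW hX, hWp.bracket_BB X Y hX hY,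
    Wp.D_zero (hWp.vf_liftB X hX), Wp.D_zero (hWp.vf_liftB Y hY)]

lemma K_liftB_liftF_liftB (hWp : IsMultiplyWarpedProduct B F f Wp)
    (hX : B.IsVF X) (hY : B.IsVF Y) {W : ∀ q, TF j q} (hW : (F j).IsVF W) :
    Wp.K (mliftB X) (mliftF j W) (mliftB Y) = 0 := by
  rw [K_swap_right (hWp.vf_liftB X hX) (hWp.vf_liftB Y hY) (hWp.vf_liftF j W hW),
    hWp.K_liftB_liftB_liftF hX hY hW, hWp.gf_liftB_liftF, Wp.D_zero (hWp.vf_liftB X hX),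
    sub_zero]

lemma K_liftF_liftB_liftB (hWp : IsMultiplyWarpedProduct B F f Wp)
    (hX : B.IsVF X) (hY : B.IsVF Y) {W : ∀ q, TF j q} (hW : (F j).IsVF W) :
    Wp.K (mliftF j W) (mliftB X) (mliftB Y) = 0 := by
  rw [K_swap_left (hWp.vf_liftB X hX) (hWp.vf_liftF j W hW) (hWp.vf_liftB Y hY),
    hWp.K_liftB_liftF_liftB hX hY hW, hWp.bracket_BF X j W hX hW, gf_zero_right, sub_zero]

lemma K_liftB_liftF_liftF_self (hWp : IsMultiplyWarpedProduct B F f Wp) (hX : B.IsVF X)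
    {V W : ∀ q, TF j q} (hV : (F j).IsVF V) (hW : (F j).IsVF W) :
    Wp.K (mliftB X) (mliftF j V) (mliftF j W)
      = fun pq => f j pq.1 * (F j).gf V W (pq.2 j) * B.D X (f j) pq.1 := by
  rw [K, hWp.D_liftB_gf_liftF_liftF hX hV hW, hWp.gf_liftF_liftB, hWp.gf_liftB_liftF,
    hWp.bracket_FF_same j V W hV hW, hWp.bracket_liftF_liftB hW hX, hWp.bracket_BF X j V hX hV,
    hWp.gf_liftB_liftF, Wp.D_zero (hWp.vf_liftF j V hV), Wp.D_zero (hWp.vf_liftF j W hW),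
    gf_zero_right, gf_zero_right]
  funext pq
  simp only [Pi.add_apply, Pi.sub_apply, Pi.smul_apply, Pi.zero_apply, smul_eq_mul]
  ring

lemma K_liftF_liftB_liftF_self (hWp : IsMultiplyWarpedProduct B F f Wp) (hX : B.IsVF X)
    {V W : ∀ q, TF j q} (hV : (F j).IsVF V) (hW : (F j).IsVF W) :
    Wp.K (mliftF j V) (mliftB X) (mliftF j W) = Wp.K (mliftB X) (mliftF j V) (mliftF j W) := by
  rw [K_swap_left (hWp.vf_liftB X hX) (hWp.vf_liftF j V hV) (hWp.vf_liftF j W hW),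
    hWp.bracket_BF X j V hX hV, gf_zero_right, sub_zero]

lemma K_liftF_liftF_liftB_self (hWp : IsMultiplyWarpedProduct B F f Wp) (hX : B.IsVF X)
    {V W : ∀ q, TF j q} (hV : (F j).IsVF V) (hW : (F j).IsVF W) :
    Wp.K (mliftF j V) (mliftF j W) (mliftB X) = -Wp.K (mliftF j V) (mliftB X) (mliftF j W) := by
  rw [K_swap_right (hWp.vf_liftF j V hV) (hWp.vf_liftB X hX) (hWp.vf_liftF j W hW),
    hWp.gf_liftB_liftF, Wp.D_zero (hWp.vf_liftF j V hV), zero_sub]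

lemma K_liftB_liftF_liftF_of_ne (hWp : IsMultiplyWarpedProduct B F f Wp) (hij : i ≠ j)
    (hX : B.IsVF X) {V : ∀ q, TF i q} {W : ∀ q, TF j q} (hV : (F i).IsVF V)
    (hW : (F j).IsVF W) :
    Wp.K (mliftB X) (mliftF i V) (mliftF j W) = 0 := by
  simp [K, hWp.gf_liftB_liftF, hWp.gf_liftF_liftB, hWp.gf_liftF_liftF_of_ne hij,
    hWp.bracket_FF_ne i j V W hij hV hW, hWp.bracket_liftF_liftB hW hX,
    hWp.bracket_BF X i V hX hV, Wp.D_zero (hWp.vf_liftB X hX),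
    Wp.D_zero (hWp.vf_liftF i V hV), Wp.D_zero (hWp.vf_liftF j W hW)]

lemma K_liftF_liftB_liftF_of_ne (hWp : IsMultiplyWarpedProduct B F f Wp) (hij : i ≠ j)
    (hX : B.IsVF X) {V : ∀ q, TF i q} {W : ∀ q, TF j q} (hV : (F i).IsVF V)
    (hW : (F j).IsVF W) :
    Wp.K (mliftF i V) (mliftB X) (mliftF j W) = 0 := by
  rw [K_swap_left (hWp.vf_liftB X hX) (hWp.vf_liftF i V hV) (hWp.vf_liftF j W hW),
    hWp.K_liftB_liftF_liftF_of_ne hij hX hV hW, hWp.bracket_BF X i V hX hV, gf_zero_right,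
    sub_zero]

lemma K_liftF_liftF_liftB_of_ne (hWp : IsMultiplyWarpedProduct B F f Wp) (hij : i ≠ j)
    (hX : B.IsVF X) {V : ∀ q, TF i q} {W : ∀ q, TF j q} (hV : (F i).IsVF V)
    (hW : (F j).IsVF W) :
    Wp.K (mliftF i V) (mliftF j W) (mliftB X) = 0 := by
  rw [K_swap_right (hWp.vf_liftF i V hV) (hWp.vf_liftB X hX) (hWp.vf_liftF j W hW),
    hWp.K_liftF_liftB_liftF_of_ne hij hX hV hW, hWp.gf_liftB_liftF,
    Wp.D_zero (hWp.vf_liftF i V hV), sub_zero]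

lemma K_liftF_liftF_liftF_self (hWp : IsMultiplyWarpedProduct B F f Wp)
    {U V W : ∀ q, TF j q} (hU : (F j).IsVF U) (hV : (F j).IsVF V) (hW : (F j).IsVF W) :
    Wp.K (mliftF j U) (mliftF j V) (mliftF j W)
      = fun pq => f j pq.1 ^ 2 * (F j).K U V W (pq.2 j) := by
  rw [K, hWp.D_liftF_gf_liftF_liftF_self hU hV hW, hWp.D_liftF_gf_liftF_liftF_self hV hW hU,
    hWp.D_liftF_gf_liftF_liftF_self hW hU hV, hWp.bracket_FF_same j V W hV hW,
    hWp.bracket_FF_same j W U hW hU, hWp.bracket_FF_same j U V hU hV,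
    hWp.gf_liftF_liftF_self, hWp.gf_liftF_liftF_self, hWp.gf_liftF_liftF_self]
  funext pq
  simp only [K, Pi.add_apply, Pi.sub_apply, Pi.smul_apply, smul_eq_mul]
  ring

lemma K_liftF_liftF_liftF_of_pairwise_ne (hWp : IsMultiplyWarpedProduct B F f Wp)
    (hij : i ≠ j) (hjk : j ≠ k) (hik : i ≠ k) {U : ∀ q, TF i q} {V : ∀ q, TF j q}
    {W : ∀ q, TF k q} (hU : (F i).IsVF U) (hV : (F j).IsVF V) (hW : (F k).IsVF W) :
    Wp.K (mliftF i U) (mliftF j V) (mliftF k W) = 0 := by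
  simp [K, hWp.gf_liftF_liftF_of_ne hij, hWp.gf_liftF_liftF_of_ne hjk,
    hWp.gf_liftF_liftF_of_ne hik.symm, hWp.bracket_FF_ne _ _ _ _ hjk hV hW,
    hWp.bracket_FF_ne _ _ _ _ hik.symm hW hU, hWp.bracket_FF_ne _ _ _ _ hij hU hV,
    Wp.D_zero (hWp.vf_liftF i U hU), Wp.D_zero (hWp.vf_liftF j V hV),
    Wp.D_zero (hWp.vf_liftF k W hW)]

lemma K_liftF_liftF_liftF_of_ne_third (hWp : IsMultiplyWarpedProduct B F f Wp) (hij : i ≠ j)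
    {U V : ∀ q, TF i q} {W : ∀ q, TF j q} (hU : (F i).IsVF U) (hV : (F i).IsVF V)
    (hW : (F j).IsVF W) :
    Wp.K (mliftF i U) (mliftF i V) (mliftF j W) = 0 := by
  simp [K, hWp.gf_liftF_liftF_of_ne hij, hWp.gf_liftF_liftF_of_ne hij.symm,
    hWp.D_liftF_gf_liftF_liftF_of_ne hij.symm hW hU hV, hWp.bracket_FF_ne _ _ _ _ hij hV hW,
    hWp.bracket_FF_ne _ _ _ _ hij.symm hW hU, hWp.bracket_FF_same i U V hU hV,
    Wp.D_zero (hWp.vf_liftF i U hU), Wp.D_zero (hWp.vf_liftF i V hV)]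

lemma K_liftF_liftF_liftF_of_ne_second (hWp : IsMultiplyWarpedProduct B F f Wp) (hij : i ≠ j)
    {U V : ∀ q, TF i q} {W : ∀ q, TF j q} (hU : (F i).IsVF U) (hV : (F i).IsVF V)
    (hW : (F j).IsVF W) :
    Wp.K (mliftF i U) (mliftF j W) (mliftF i V) = 0 := by
  rw [K_swap_right (hWp.vf_liftF i U hU) (hWp.vf_liftF i V hV) (hWp.vf_liftF j W hW),
    hWp.K_liftF_liftF_liftF_of_ne_third hij hU hV hW, hWp.gf_liftF_liftF_of_ne hij,
    Wp.D_zero (hWp.vf_liftF i U hU), sub_zero]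

lemma K_liftF_liftF_liftF_of_ne_first (hWp : IsMultiplyWarpedProduct B F f Wp) (hij : i ≠ j)
    {U V : ∀ q, TF i q} {W : ∀ q, TF j q} (hU : (F i).IsVF U) (hV : (F i).IsVF V)
    (hW : (F j).IsVF W) :
    Wp.K (mliftF j W) (mliftF i U) (mliftF i V) = 0 := by
  rw [K_swap_left (hWp.vf_liftF i U hU) (hWp.vf_liftF j W hW) (hWp.vf_liftF i V hV),
    hWp.K_liftF_liftF_liftF_of_ne_second hij hU hV hW, hWp.bracket_FF_ne _ _ _ _ hij hU hW,
    gf_zero_right, sub_zero]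

end SSRM.IsMultiplyWarpedProduct

/-- Proposition 5.2: the Koszul form of a (possibly degenerate)
multiply warped product `B × F₁ × ⋯ × F_l`, on lifts of vector fields
`X,Y,Z ∈ Γ(TB)` and `U_j,V_j,W_j ∈ Γ(TF_j)`, in terms of the data on the factors. -/
theorem koszul_multiplyWarpedProduct
    {MB : Type*} {TB : MB → Type*}
    [∀ p, AddCommGroup (TB p)] [∀ p, Module ℝ (TB p)]
    {l : ℕ} {MF : Fin l → Type*} {TF : ∀ j, MF j → Type*}
    [∀ j q, AddCommGroup (TF j q)] [∀ j q, Module ℝ (TF j q)]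
    (B : SSRM MB TB) (F : ∀ j, SSRM (MF j) (TF j)) (f : Fin l → MB → ℝ)
    (Wp : SSRM (MB × ∀ j, MF j) fun pq => TB pq.1 × (∀ j, TF j (pq.2 j)))
    (hWp : SSRM.IsMultiplyWarpedProduct B F f Wp)
    (X Y Z : ∀ p, TB p) (hX : B.IsVF X) (hY : B.IsVF Y) (hZ : B.IsVF Z)
    (U V W : ∀ j, ∀ q, TF j q)
    (hU : ∀ j, (F j).IsVF (U j)) (hV : ∀ j, (F j).IsVF (V j))
    (hW : ∀ j, (F j).IsVF (W j)) :
    -- (1) `K(X,Y,Z) = K_B(X,Y,Z)`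
    Wp.K (SSRM.mliftB X) (SSRM.mliftB Y) (SSRM.mliftB Z)
      = (fun pq => B.K X Y Z pq.1) ∧
    -- (2) `K(X,Y,W_j) = K(X,W_j,Y) = K(W_j,X,Y) = 0`
    (∀ j, Wp.K (SSRM.mliftB X) (SSRM.mliftB Y) (SSRM.mliftF j (W j)) = 0 ∧
      Wp.K (SSRM.mliftB X) (SSRM.mliftF j (W j)) (SSRM.mliftB Y) = 0 ∧
      Wp.K (SSRM.mliftF j (W j)) (SSRM.mliftB X) (SSRM.mliftB Y) = 0) ∧
    -- (3) `K(X,V_j,W_j) = K(V_j,X,W_j) = −K(V_j,W_j,X) = f_j·g_{F_j}(V_j,W_j)·X(f_j)`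
    (∀ j, Wp.K (SSRM.mliftB X) (SSRM.mliftF j (V j)) (SSRM.mliftF j (W j))
        = Wp.K (SSRM.mliftF j (V j)) (SSRM.mliftB X) (SSRM.mliftF j (W j)) ∧
      Wp.K (SSRM.mliftF j (V j)) (SSRM.mliftB X) (SSRM.mliftF j (W j))
        = -Wp.K (SSRM.mliftF j (V j)) (SSRM.mliftF j (W j)) (SSRM.mliftB X) ∧
      Wp.K (SSRM.mliftB X) (SSRM.mliftF j (V j)) (SSRM.mliftF j (W j))
        = (fun pq => f j pq.1 * (F j).gf (V j) (W j) (pq.2 j) * B.D X (f j) pq.1)) ∧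
    -- (4) `K(X,V_i,W_j) = K(V_i,X,W_j) = K(V_i,W_j,X) = 0` for `i ≠ j`
    (∀ i j, i ≠ j →
      Wp.K (SSRM.mliftB X) (SSRM.mliftF i (V i)) (SSRM.mliftF j (W j)) = 0 ∧
      Wp.K (SSRM.mliftF i (V i)) (SSRM.mliftB X) (SSRM.mliftF j (W j)) = 0 ∧
      Wp.K (SSRM.mliftF i (V i)) (SSRM.mliftF j (W j)) (SSRM.mliftB X) = 0) ∧
    -- (5) `K(U_j,V_j,W_j) = f_j²·K_{F_j}(U_j,V_j,W_j)`
    (∀ j, Wp.K (SSRM.mliftF j (U j)) (SSRM.mliftF j (V j)) (SSRM.mliftF j (W j))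
      = (fun pq => f j pq.1 ^ 2 * (F j).K (U j) (V j) (W j) (pq.2 j))) ∧
    -- (6) `K(U_i,V_j,W_k) = 0` for pairwise distinct `i,j,k`
    (∀ i j k, i ≠ j → j ≠ k → i ≠ k →
      Wp.K (SSRM.mliftF i (U i)) (SSRM.mliftF j (V j)) (SSRM.mliftF k (W k)) = 0) ∧
    -- (7) `K(U_i,V_i,W_j) = K(U_i,W_j,V_i) = K(W_j,U_i,V_i) = 0` for `i ≠ j`
    (∀ i j, i ≠ j →
      Wp.K (SSRM.mliftF i (U i)) (SSRM.mliftF i (V i)) (SSRM.mliftF j (W j)) = 0 ∧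
      Wp.K (SSRM.mliftF i (U i)) (SSRM.mliftF j (W j)) (SSRM.mliftF i (V i)) = 0 ∧
      Wp.K (SSRM.mliftF j (W j)) (SSRM.mliftF i (U i)) (SSRM.mliftF i (V i)) = 0) := by
  refine ⟨hWp.K_liftB_liftB_liftB hX hY hZ, fun j => ?_, fun j => ?_, fun i j hij => ?_,
    fun j => hWp.K_liftF_liftF_liftF_self (hU j) (hV j) (hW j),
    fun i j k hij hjk hik =>
      hWp.K_liftF_liftF_liftF_of_pairwise_ne hij hjk hik (hU i) (hV j) (hW k),
    fun i j hij => ?_⟩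
  · exact ⟨hWp.K_liftB_liftB_liftF hX hY (hW j), hWp.K_liftB_liftF_liftB hX hY (hW j),
      hWp.K_liftF_liftB_liftB hX hY (hW j)⟩
  · exact ⟨(hWp.K_liftF_liftB_liftF_self hX (hV j) (hW j)).symm,
      neg_eq_iff_eq_neg.mp (hWp.K_liftF_liftF_liftB_self hX (hV j) (hW j)).symm,
      hWp.K_liftB_liftF_liftF_self hX (hV j) (hW j)⟩
  · exact ⟨hWp.K_liftB_liftF_liftF_of_ne hij hX (hV i) (hW j),
      hWp.K_liftF_liftB_liftF_of_ne hij hX (hV i) (hW j),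
      hWp.K_liftF_liftF_liftB_of_ne hij hX (hV i) (hW j)⟩
  · exact ⟨hWp.K_liftF_liftF_liftF_of_ne_third hij (hU i) (hV i) (hW j),
      hWp.K_liftF_liftF_liftF_of_ne_second hij (hU i) (hV i) (hW j),
      hWp.K_liftF_liftF_liftF_of_ne_first hij (hU i) (hV i) (hW j)⟩
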